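/- Let K be a 1×2 real matrix and let P, Q be symmetric 2×2 real matrices with Q positive definite and (A₁+B₁K)ᵀP + P(A₁+B₁K) = −Q. Then there exists M > 0 such that for all T ∈ [0,1] and all z ∈ ℝ², writing A_cl(T) := I + (A₁+B₁K) T + B₂K T², one has zᵀ A_cl(T)ᵀ P A_cl(T) z − zᵀ P z ≤ −λ_min(Q) T ‖z‖² + M T² ‖z‖². -/

import Mathlib

open Matrix

def A1 : Matrix (Fin 2) (Fin 2) ℝ := !![0, 1; 0, 0]
def B1 : Matrix (Fin 2) (Fin 1) ℝ := !![0; 1]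
noncomputable def B2 : Matrix (Fin 2) (Fin 1) ℝ := !![1/2; 0]

/-- The closed-loop matrix A_cl(T) = I + (A₁+B₁K)T + B₂K T². -/
noncomputable def Acl (K : Matrix (Fin 1) (Fin 2) ℝ) (T : ℝ) : Matrix (Fin 2) (Fin 2) ℝ :=
  1 + T • (A1 + B1 * K) + T ^ 2 • (B2 * K)

/-!
Expanding `A_cl(T)ᵀ P A_cl(T) - P` in powers of `T`, the linear coefficient is the Lyapunov
expression `(A₁ + B₁K)ᵀP + P(A₁ + B₁K) = -Q`, whose quadratic form is at most `-λ_min(Q)‖z‖²`.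
All higher-order terms are `T²` times a matrix `R(T)` that is polynomial in `T`, so its entrywise
sup norm is bounded on `[0, 1]`; and a quadratic form is bounded by `n · ‖S‖_∞ · ‖z‖²` by
Cauchy–Schwarz on `∑ |zᵢ|`.
-/

attribute [local instance] Matrix.normedAddCommGroup Matrix.normedSpace

section

variable {n : Type*} [Fintype n]

namespace Matrix

theorem mulVec_dotProduct_mulVec_mulVec {R : Type*} [CommSemiring R] (A P : Matrix n n R)
    (z : n → R) : (A *ᵥ z) ⬝ᵥ (P *ᵥ (A *ᵥ z)) = z ⬝ᵥ ((Aᵀ * P * A) *ᵥ z) := by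
  rw [← mulVec_mulVec, dotProduct_mulVec, ← vecMul_transpose, vecMul_vecMul, dotProduct_mulVec]

theorem abs_dotProduct_mulVec_le (S : Matrix n n ℝ) (z : n → ℝ) :
    |z ⬝ᵥ (S *ᵥ z)| ≤ Fintype.card n * ‖S‖ * (z ⬝ᵥ z) := by
  have hentry (i j : n) : |z i * (S i j * z j)| ≤ ‖S‖ * (|z i| * |z j|) := by
    rw [abs_mul, abs_mul, mul_left_comm]
    exact mul_le_mul_of_nonneg_right (norm_entry_le_entrywise_sup_norm S) (by positivity)
  calc |z ⬝ᵥ (S *ᵥ z)| = |∑ i, ∑ j, z i * (S i j * z j)| := by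
        simp only [dotProduct, mulVec, Finset.mul_sum]
    _ ≤ ∑ i, ∑ j, ‖S‖ * (|z i| * |z j|) :=
        (Finset.abs_sum_le_sum_abs _ _).trans <| Finset.sum_le_sum fun i _ =>
          (Finset.abs_sum_le_sum_abs _ _).trans <| Finset.sum_le_sum fun j _ => hentry i j
    _ = ‖S‖ * (∑ i, |z i|) ^ 2 := by
        rw [sq, Finset.sum_mul_sum, Finset.mul_sum]
        simp only [Finset.mul_sum]
    _ ≤ ‖S‖ * (Fintype.card n * ∑ i, |z i| ^ 2) :=
        mul_le_mul_of_nonneg_left sq_sum_le_card_mul_sum_sq (norm_nonneg S)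
    _ = Fintype.card n * ‖S‖ * (z ⬝ᵥ z) := by
        simp only [sq_abs, dotProduct, ← sq]; ring

end Matrix

def lyapunovRemainder {R : Type*} [CommRing R] (C D P : Matrix n n R) (T : R) : Matrix n n R :=
  Dᵀ * P + P * D + Cᵀ * P * C + T • (Dᵀ * P * C + Cᵀ * P * D) + T ^ 2 • (Dᵀ * P * D)

theorem transpose_mul_mul_sub_eq_lyapunovRemainder {R : Type*} [CommRing R] [DecidableEq n]
    (C D P : Matrix n n R) (T : R) :
    (1 + T • C + T ^ 2 • D)ᵀ * P * (1 + T • C + T ^ 2 • D) - P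
      = T • (Cᵀ * P + P * C) + T ^ 2 • lyapunovRemainder C D P T := by
  simp only [lyapunovRemainder, transpose_add, transpose_smul, transpose_one, mul_add, add_mul,
    smul_add, mul_smul_comm, smul_mul_assoc, smul_smul, one_mul, mul_one]
  module

theorem norm_lyapunovRemainder_le (C D P : Matrix n n ℝ) {T : ℝ} (hT : T ∈ Set.Icc (0 : ℝ) 1) :
    ‖lyapunovRemainder C D P T‖
      ≤ ‖Dᵀ * P + P * D + Cᵀ * P * C‖ + ‖Dᵀ * P * C + Cᵀ * P * D‖ + ‖Dᵀ * P * D‖ := by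
  obtain ⟨hT0, hT1⟩ := hT
  have hT2 : T ^ 2 ≤ 1 := pow_le_one₀ hT0 hT1
  refine (norm_add₃_le ..).trans (add_le_add_three le_rfl ?_ ?_)
  · rw [norm_smul, Real.norm_of_nonneg hT0]
    exact mul_le_of_le_one_left (norm_nonneg _) hT1
  · rw [norm_smul, Real.norm_of_nonneg (sq_nonneg T)]
    exact mul_le_of_le_one_left (norm_nonneg _) hT2

theorem exists_dotProduct_lyapunovRemainder_le (C D P : Matrix n n ℝ) :
    ∃ M : ℝ, 0 < M ∧ ∀ T ∈ Set.Icc (0 : ℝ) 1, ∀ z : n → ℝ,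
      z ⬝ᵥ (lyapunovRemainder C D P T *ᵥ z) ≤ M * (z ⬝ᵥ z) := by
  set c := ‖Dᵀ * P + P * D + Cᵀ * P * C‖ + ‖Dᵀ * P * C + Cᵀ * P * D‖ + ‖Dᵀ * P * D‖
  refine ⟨Fintype.card n * c + 1, by positivity, fun T hT z => ?_⟩
  have hzz : 0 ≤ z ⬝ᵥ z := by simpa using dotProduct_self_star_nonneg z
  have hnorm : Fintype.card n * ‖lyapunovRemainder C D P T‖ ≤ Fintype.card n * c + 1 :=
    (mul_le_mul_of_nonneg_left (norm_lyapunovRemainder_le C D P hT) (by positivity)).trans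
      (le_add_of_nonneg_right zero_le_one)
  calc z ⬝ᵥ (lyapunovRemainder C D P T *ᵥ z)
      ≤ Fintype.card n * ‖lyapunovRemainder C D P T‖ * (z ⬝ᵥ z) :=
        (le_abs_self _).trans (abs_dotProduct_mulVec_le _ z)
    _ ≤ (Fintype.card n * c + 1) * (z ⬝ᵥ z) := by gcongr

end

theorem approximate_closed_loop_lyapunov_decrease_general
    (K : Matrix (Fin 1) (Fin 2) ℝ) (P Q : Matrix (Fin 2) (Fin 2) ℝ)
    (hLyap : (A1 + B1 * K)ᵀ * P + P * (A1 + B1 * K) = -Q)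
    (lamQ : ℝ)
    (hlamQ : IsGreatest {l : ℝ | ∀ z : Fin 2 → ℝ, l * (z ⬝ᵥ z) ≤ z ⬝ᵥ (Q *ᵥ z)} lamQ) :
    ∃ M : ℝ, 0 < M ∧
      ∀ T ∈ Set.Icc (0 : ℝ) 1, ∀ z : Fin 2 → ℝ,
        (Acl K T *ᵥ z) ⬝ᵥ (P *ᵥ (Acl K T *ᵥ z)) - z ⬝ᵥ (P *ᵥ z)
          ≤ -lamQ * T * (z ⬝ᵥ z) + M * T ^ 2 * (z ⬝ᵥ z) := by
  obtain ⟨M, hM, hR⟩ := exists_dotProduct_lyapunovRemainder_le (A1 + B1 * K) (B2 * K) P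
  refine ⟨M, hM, fun T hT z => ?_⟩
  have hexpand : (Acl K T *ᵥ z) ⬝ᵥ (P *ᵥ (Acl K T *ᵥ z)) - z ⬝ᵥ (P *ᵥ z)
      = -T * (z ⬝ᵥ (Q *ᵥ z))
        + T ^ 2 * (z ⬝ᵥ (lyapunovRemainder (A1 + B1 * K) (B2 * K) P T *ᵥ z)) := by
    rw [mulVec_dotProduct_mulVec_mulVec, ← dotProduct_sub, ← sub_mulVec, Acl,
      transpose_mul_mul_sub_eq_lyapunovRemainder, hLyap]
    simp only [add_mulVec, smul_mulVec, neg_mulVec, dotProduct_add, dotProduct_smul,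
      dotProduct_neg, smul_eq_mul]
    ring
  have hdecay := mul_le_mul_of_nonneg_left (hlamQ.1 z) hT.1
  have hremainder := mul_le_mul_of_nonneg_left (hR T hT z) (sq_nonneg T)
  rw [hexpand]
  linarith

theorem approximate_closed_loop_lyapunov_decrease
    (K : Matrix (Fin 1) (Fin 2) ℝ) (P Q : Matrix (Fin 2) (Fin 2) ℝ)
    (hPs : P.IsSymm) (hQs : Q.IsSymm) (hQ : Q.PosDef)
    (hLyap : (A1 + B1 * K)ᵀ * P + P * (A1 + B1 * K) = -Q)
    (lamQ : ℝ)
    (hlamQ : IsGreatest {l : ℝ | ∀ z : Fin 2 → ℝ, l * (z ⬝ᵥ z) ≤ z ⬝ᵥ (Q *ᵥ z)} lamQ) :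
    ∃ M : ℝ, 0 < M ∧
      ∀ T ∈ Set.Icc (0 : ℝ) 1, ∀ z : Fin 2 → ℝ,
        (Acl K T *ᵥ z) ⬝ᵥ (P *ᵥ (Acl K T *ᵥ z)) - z ⬝ᵥ (P *ᵥ z)
          ≤ -lamQ * T * (z ⬝ᵥ z) + M * T ^ 2 * (z ⬝ᵥ z) :=
  approximate_closed_loop_lyapunov_decrease_general K P Q hLyap lamQ hlamQ
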